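/- Let X be a Polish space and ∼ an F_σ equivalence relation on X. If ∼ has uncountably many equivalence classes, then there exists a Cantor set (nonempty perfect set) P ⊆ X consisting of pairwise ∼-inequivalent elements; in particular ∼ has continuum many classes. -/

import Mathlib

/-!
Call `x` a condensation point of the classes if no neighbourhood of `x` is covered by countably
many classes. By second countability the other points are covered by countably many classes, so
condensation points exist when there are uncountably many classes, and next to any condensation
point there are condensation points avoiding any given countable family of classes.

Write `∼ = ⋃ₘ Fₘ` with `Fₘ` closed. Build a Cantor scheme of closed balls around condensation
points such that at level `n` the centres are pairwise inequivalent and the radius is so small that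
the product of two distinct balls of the level misses `F₀, …, Fₙ₋₁`: such a radius exists because a
pair of inequivalent centres lies outside every closed set `Fₘ`. The branches of the scheme define
a continuous map on Cantor space with pairwise inequivalent values, and its range is the required
perfect set.
-/

open Set Filter Topology Metric Function CantorScheme PiNat

instance {β : Type*} [TopologicalSpace β] [Nontrivial β] : PerfectSpace (ℕ → β) := by
  refine perfectSpace_iff_forall_not_isolated.2 fun σ => ?_
  choose b hb using fun n => exists_ne (σ n)
  have hlim : Tendsto (fun n => update σ n (b n)) atTop (𝓝 σ) :=
    tendsto_pi_nhds.2 fun i => tendsto_const_nhds.congr' <| by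
      filter_upwards [eventually_gt_atTop i] with n hn
      exact (update_of_ne hn.ne _ _).symm
  have hne : ∀ n, update σ n (b n) ∈ ({σ}ᶜ : Set (ℕ → β)) := fun n h =>
    hb n (by simpa using congrFun h n)
  exact (tendsto_nhdsWithin_iff.2 ⟨hlim, Eventually.of_forall hne⟩).neBot

theorem Continuous.perfect_range {α X : Type*} [TopologicalSpace α] [CompactSpace α]
    [PerfectSpace α] [TopologicalSpace X] [T2Space X] {g : α → X} (hg : Continuous g)
    (hinj : Injective g) : Perfect (range g) := by
  refine ⟨(isCompact_range hg).isClosed, preperfect_iff_nhds.2 ?_⟩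
  rintro _ ⟨σ, rfl⟩ U hU
  obtain ⟨τ, ⟨hτU, -⟩, hτσ⟩ :=
    accPt_iff_nhds.1 (PerfectSpace.univ_preperfect σ (mem_univ σ)) _ (hg.continuousAt hU)
  exact ⟨g τ, ⟨hτU, mem_range_self τ⟩, hinj.ne hτσ⟩

section Condensation

variable {X : Type*} (r : X → X → Prop)

def CoveredByCountablyManyClasses (s : Set X) : Prop :=
  ∃ D : Set X, D.Countable ∧ ∀ x ∈ s, ∃ d ∈ D, r x d

def classCondensationPoints [TopologicalSpace X] : Set X :=
  {x | ∀ U ∈ 𝓝 x, ¬ CoveredByCountablyManyClasses r U}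

variable {r}

theorem CoveredByCountablyManyClasses.mono {s t : Set X}
    (ht : CoveredByCountablyManyClasses r t) (hst : s ⊆ t) :
    CoveredByCountablyManyClasses r s :=
  let ⟨D, hD, hcov⟩ := ht
  ⟨D, hD, fun x hx => hcov x (hst hx)⟩

theorem CoveredByCountablyManyClasses.union {s t : Set X}
    (hs : CoveredByCountablyManyClasses r s) (ht : CoveredByCountablyManyClasses r t) :
    CoveredByCountablyManyClasses r (s ∪ t) := by
  obtain ⟨D, hD, hsD⟩ := hs
  obtain ⟨E, hE, htE⟩ := ht
  refine ⟨D ∪ E, hD.union hE, ?_⟩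
  rintro x (hx | hx)
  · obtain ⟨d, hd, hxd⟩ := hsD x hx
    exact ⟨d, Or.inl hd, hxd⟩
  · obtain ⟨d, hd, hxd⟩ := htE x hx
    exact ⟨d, Or.inr hd, hxd⟩

theorem coveredByCountablyManyClasses_sUnion {S : Set (Set X)} (hS : S.Countable)
    (h : ∀ s ∈ S, CoveredByCountablyManyClasses r s) :
    CoveredByCountablyManyClasses r (⋃₀ S) := by
  choose! D hD hcov using h
  refine ⟨⋃ s ∈ S, D s, hS.biUnion hD, ?_⟩
  rintro x ⟨s, hs, hx⟩
  obtain ⟨d, hd, hxd⟩ := hcov s hs x hx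
  exact ⟨d, mem_biUnion hs hd, hxd⟩

variable [TopologicalSpace X] [SecondCountableTopology X]

theorem coveredByCountablyManyClasses_compl_classCondensationPoints :
    CoveredByCountablyManyClasses r (classCondensationPoints r)ᶜ := by
  refine (coveredByCountablyManyClasses_sUnion
    ((TopologicalSpace.countable_countableBasis X).mono (sep_subset _ _)) fun B hB => hB.2).mono ?_
  intro x hx
  simp only [classCondensationPoints, mem_compl_iff, mem_ofPred_eq, not_forall, not_not] at hx
  obtain ⟨U, hU, hUcov⟩ := hx
  obtain ⟨B, hB, hxB, hBU⟩ := (TopologicalSpace.isBasis_countableBasis X).mem_nhds_iff.1 hU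
  exact ⟨B, ⟨hB, hUcov.mono hBU⟩, hxB⟩

theorem classCondensationPoints_nonempty (h : ¬ CoveredByCountablyManyClasses r univ) :
    (classCondensationPoints r).Nonempty := by
  by_contra hempty
  have hcompl := coveredByCountablyManyClasses_compl_classCondensationPoints (r := r)
  rw [not_nonempty_iff_eq_empty.1 hempty, compl_empty] at hcompl
  exact h hcompl

theorem exists_mem_classCondensationPoints_not_rel {x : X} (hx : x ∈ classCondensationPoints r)
    {U : Set X} (hU : U ∈ 𝓝 x) {D : Set X} (hD : D.Countable) :
    ∃ y ∈ U ∩ classCondensationPoints r, ∀ d ∈ D, ¬ r y d := by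
  by_contra! h
  refine hx U hU <| (CoveredByCountablyManyClasses.union ⟨D, hD, h⟩
    coveredByCountablyManyClasses_compl_classCondensationPoints).mono fun y hy => ?_
  by_cases hy' : y ∈ classCondensationPoints r
  exacts [Or.inl ⟨hy, hy'⟩, Or.inr hy']

end Condensation

theorem exists_pairwise_not_rel_of_finite {ι X : Type*} [Nonempty X] {r : X → X → Prop}
    [Std.Symm r] {I : Set ι} (hI : I.Finite) (P : ι → Set X)
    (hP : ∀ i ∈ I, ∀ D : Set X, D.Finite → ∃ y ∈ P i, ∀ d ∈ D, ¬ r y d) :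
    ∃ y : ι → X, (∀ i ∈ I, y i ∈ P i) ∧ I.Pairwise fun i j => ¬ r (y i) (y j) := by
  classical
  induction I, hI using Set.Finite.induction_on with
  | empty => exact ⟨fun _ => Classical.arbitrary X, by simp, pairwise_empty _⟩
  | @insert a s has hs ih =>
    obtain ⟨y, hyP, hy⟩ := ih fun i hi => hP i (mem_insert_of_mem a hi)
    obtain ⟨z, hzP, hz⟩ := hP a (mem_insert a s) (y '' s) (hs.image y)
    have hupdate : ∀ i ∈ s, update y a z i = y i := fun i hi =>
      update_of_ne (ne_of_mem_of_not_mem hi has) _ _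
    refine ⟨update y a z, ?_, pairwise_insert.2 ⟨fun i hi j hj hij => ?_, fun j hj _ => ?_⟩⟩
    · rintro i (rfl | hi)
      · simpa using hzP
      · simpa [hupdate i hi] using hyP i hi
    · simpa [hupdate i hi, hupdate j hj] using hy hi hj hij
    · simp only [update_self, hupdate j hj]
      exact ⟨hz _ (mem_image_of_mem y hj), fun h => hz _ (mem_image_of_mem y hj) (symm_of r h)⟩

theorem eventually_disjoint_closedBall_prod {X Y : Type*} [PseudoMetricSpace X]
    [PseudoMetricSpace Y] {s : Set (X × Y)} (hs : IsClosed s) {x : X} {y : Y} (h : (x, y) ∉ s) :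
    ∀ᶠ δ in 𝓝 (0 : ℝ), Disjoint (closedBall x δ ×ˢ closedBall y δ) s := by
  filter_upwards [eventually_closedBall_subset (hs.isOpen_compl.mem_nhds h)] with δ hδ
  rw [closedBall_prod_same]
  exact subset_compl_iff_disjoint_right.1 hδ

section Scheme

variable {X : Type*} [MetricSpace X] {r : X → X → Prop} {F : ℕ → Set (X × X)}

theorem eventually_pairwise_disjoint_closedBall_prod (hFc : ∀ m, IsClosed (F m))
    (hFr : ∀ m, F m ⊆ {p | r p.1 p.2}) {ι : Type*} {I : Set ι} (hI : I.Finite) {c : ι → X}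
    (hc : I.Pairwise fun i j => ¬ r (c i) (c j)) (k : ℕ) :
    ∀ᶠ δ in 𝓝 (0 : ℝ), I.Pairwise fun i j =>
      ∀ m < k, Disjoint (closedBall (c i) δ ×ˢ closedBall (c j) δ) (F m) :=
  (eventually_all_finite hI).2 fun _ hi => (eventually_all_finite hI).2 fun _ hj =>
    eventually_imp_distrib_left.2 fun hij => (eventually_all_finite (finite_Iio k)).2 fun m _ =>
      eventually_disjoint_closedBall_prod (hFc m) fun hm => hc hi hj hij (hFr m hm)

variable (r F) in
/-- Level `n` of the scheme: its nodes are the lists of length `n` (the values of `c` on other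
lists play no role), node `l` being the closed ball of radius `ε` around `c l`. -/
structure IsSeparatedLevel (n : ℕ) (c : List Bool → X) (ε : ℝ) : Prop where
  radius_pos : 0 < ε
  radius_le : ε ≤ 2⁻¹ ^ n
  mem_classCondensationPoints : ∀ l : List Bool, l.length = n → c l ∈ classCondensationPoints r
  not_rel : {l : List Bool | l.length = n}.Pairwise fun l l' => ¬ r (c l) (c l')
  disjoint : {l : List Bool | l.length = n}.Pairwise fun l l' =>
    ∀ m < n, Disjoint (closedBall (c l) ε ×ˢ closedBall (c l') ε) (F m)

variable [SecondCountableTopology X]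

theorem IsSeparatedLevel.exists_children [Std.Symm r] {n : ℕ} {c : List Bool → X}
    {ε : ℝ} (h : IsSeparatedLevel r F n c ε) :
    ∃ c' : List Bool → X, (∀ l : List Bool, l.length = n + 1 → c' l ∈ classCondensationPoints r) ∧
      {l : List Bool | l.length = n + 1}.Pairwise (fun l l' => ¬ r (c' l) (c' l')) ∧
      ∀ l : List Bool, l.length = n → ∀ a, dist (c' (a :: l)) (c l) < ε / 2 := by
  have : Nonempty X := ⟨c []⟩
  -- the child `false :: l` keeps the centre `c l`, the child `true :: l` gets a new centre `y l`
  obtain ⟨y, hyP, hy⟩ := exists_pairwise_not_rel_of_finite (List.finite_length_eq Bool n)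
    (fun l => ball (c l) (ε / 2) ∩ classCondensationPoints r ∩ {z | ∀ t, ¬ r z (c t)})
    fun l hl D hD => by
      obtain ⟨z, ⟨hzU, hzC⟩, hz⟩ := exists_mem_classCondensationPoints_not_rel
        (h.mem_classCondensationPoints l hl) (ball_mem_nhds _ (half_pos h.radius_pos))
        (hD.countable.union (countable_range c))
      exact ⟨z, ⟨⟨hzU, hzC⟩, fun t => hz _ (Or.inr (mem_range_self t))⟩,
        fun d hd => hz d (Or.inl hd)⟩
  refine ⟨fun l => cond l.headI (y l.tail) (c l.tail), ?_, ?_, ?_⟩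
  · rintro (_ | ⟨_ | _, l⟩) hl
    · simp at hl
    · exact h.mem_classCondensationPoints l (Nat.succ_injective hl)
    · exact (hyP l (Nat.succ_injective hl)).1.2
  · rintro (_ | ⟨a, l⟩) hl (_ | ⟨b, l'⟩) hl' hne
    · simp at hl
    · simp at hl
    · simp at hl'
    replace hl : l.length = n := Nat.succ_injective hl
    replace hl' : l'.length = n := Nat.succ_injective hl'
    cases a <;> cases b
    · exact h.not_rel hl hl' (ne_of_apply_ne (List.cons false) hne)
    · exact fun hr => (hyP l' hl').2 l (symm_of r hr)
    · exact (hyP l hl).2 l'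
    · exact hy hl hl' (ne_of_apply_ne (List.cons true) hne)
  · rintro l hl (_ | _)
    · simpa using half_pos h.radius_pos
    · exact (hyP l hl).1.1

theorem IsSeparatedLevel.exists_succ [Std.Symm r] (hFc : ∀ m, IsClosed (F m))
    (hFr : ∀ m, F m ⊆ {p | r p.1 p.2}) {n : ℕ} {c : List Bool → X} {ε : ℝ}
    (h : IsSeparatedLevel r F n c ε) :
    ∃ c' ε', IsSeparatedLevel r F (n + 1) c' ε' ∧
      ∀ l : List Bool, l.length = n → ∀ a, closedBall (c' (a :: l)) ε' ⊆ closedBall (c l) ε := by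
  obtain ⟨c', hc'mem, hc'rel, hc'dist⟩ := h.exists_children
  have hsmall := (eventually_pairwise_disjoint_closedBall_prod hFc hFr
    (List.finite_length_eq Bool (n + 1)) hc'rel (n + 1)).and
    (eventually_le_nhds (half_pos h.radius_pos))
  obtain ⟨δ, ⟨hδdisj, hδle⟩, hδpos⟩ :=
    ((hsmall.filter_mono (nhdsWithin_le_nhds (s := Ioi 0))).and self_mem_nhdsWithin).exists
  refine ⟨c', δ, ⟨hδpos, ?_, hc'mem, hc'rel, hδdisj⟩,
    fun l hl a => closedBall_subset_closedBall' ?_⟩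
  · calc δ ≤ ε / 2 := hδle
      _ ≤ 2⁻¹ ^ n / 2 := by gcongr; exact h.radius_le
      _ = 2⁻¹ ^ (n + 1) := by ring
  · linarith [hc'dist l hl a]

theorem exists_seq_isSeparatedLevel [Std.Symm r] (hFc : ∀ m, IsClosed (F m))
    (hFr : ∀ m, F m ⊆ {p | r p.1 p.2}) (hne : (classCondensationPoints r).Nonempty) :
    ∃ (c : ℕ → List Bool → X) (ε : ℕ → ℝ), ∀ n, IsSeparatedLevel r F n (c n) (ε n) ∧
      ∀ l : List Bool, l.length = n → ∀ a,
        closedBall (c (n + 1) (a :: l)) (ε (n + 1)) ⊆ closedBall (c n l) (ε n) := by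
  obtain ⟨x, hx⟩ := hne
  have h0 : IsSeparatedLevel r F 0 (fun _ => x) 1 :=
    ⟨one_pos, by norm_num, fun _ _ => hx,
      fun l hl l' hl' hne => (hne (by simp_all [List.length_eq_zero_iff])).elim,
      fun _ _ _ _ _ m hm => absurd hm m.not_lt_zero⟩
  choose! c' ε' hsep hsub using
    fun n c ε (h : IsSeparatedLevel r F n c ε) => h.exists_succ hFc hFr
  let level : ℕ → (List Bool → X) × ℝ := fun n =>
    Nat.rec ((fun _ => x), 1) (fun n p => (c' n p.1 p.2, ε' n p.1 p.2)) n
  have hlevel : ∀ n, IsSeparatedLevel r F n (level n).1 (level n).2 := fun n => by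
    induction n with
    | zero => exact h0
    | succ n ih => exact hsep n _ _ ih
  exact ⟨fun n => (level n).1, fun n => (level n).2, fun n => ⟨hlevel n, hsub n _ _ (hlevel n)⟩⟩

theorem exists_continuous_pairwise_not_rel [CompleteSpace X] [Std.Symm r]
    (hFc : ∀ m, IsClosed (F m)) (hF : {p : X × X | r p.1 p.2} = ⋃ m, F m)
    (huncount : ¬ CoveredByCountablyManyClasses r univ) :
    ∃ g : (ℕ → Bool) → X, Continuous g ∧ Pairwise fun σ τ => ¬ r (g σ) (g τ) := by
  obtain ⟨c, ε, hsep⟩ := exists_seq_isSeparatedLevel hFc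
    (fun m => hF ▸ subset_iUnion F m) (classCondensationPoints_nonempty huncount)
  let A : List Bool → Set X := fun l => closedBall (c l.length l) (ε l.length)
  have hA : ∀ σ n, A (res σ n) = closedBall (c n (res σ n)) (ε n) := by simp [A, res_length]
  have hanti : ClosureAntitone A :=
    Antitone.closureAntitone (fun l a => (hsep l.length).2 l rfl a) fun _ => isClosed_closedBall
  have hdiam : VanishingDiam A := by
    intro σ
    have hlim : Tendsto (fun n => ENNReal.ofReal (2 * 2⁻¹ ^ n)) atTop (𝓝 0) := by
      have := tendsto_pow_atTop_nhds_zero_of_lt_one (by norm_num : (0 : ℝ) ≤ 2⁻¹) (by norm_num)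
      simpa using ENNReal.tendsto_ofReal (this.const_mul 2)
    refine tendsto_of_tendsto_of_tendsto_of_le_of_le tendsto_const_nhds hlim (fun _ => bot_le)
      fun n => ediam_le_of_forall_dist_le fun x hx y hy => ?_
    rw [hA, mem_closedBall] at hx hy
    linarith [dist_triangle_right x y (c n (res σ n)), (hsep n).1.radius_le]
  have hdom := hanti.map_of_vanishingDiam hdiam fun _ =>
    nonempty_closedBall.2 (hsep _).1.radius_pos.le
  let g : (ℕ → Bool) → X := fun σ => (inducedMap A).2 ⟨σ, hdom ▸ mem_univ σ⟩
  have hg : ∀ σ n, g σ ∈ closedBall (c n (res σ n)) (ε n) := fun σ n => hA σ n ▸ map_mem _ n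
  refine ⟨g, hdiam.map_continuous.comp (by fun_prop), fun σ τ hστ hr => ?_⟩
  obtain ⟨m, hm⟩ := mem_iUnion.1 (hF ▸ hr : (g σ, g τ) ∈ ⋃ m, F m)
  set n := max (m + 1) (firstDiff σ τ + 1)
  have hres : res σ n ≠ res τ n := fun h =>
    apply_firstDiff_ne hστ (res_eq_res.1 h (by omega))
  exact disjoint_left.1 ((hsep n).1.disjoint (res_length σ n) (res_length τ n) hres m (by omega))
    ⟨hg σ n, hg τ n⟩ hm

end Scheme

/-- An F_σ equivalence relation on a Polish space with uncountably many
classes admits a nonempty perfect set of pairwise inequivalent elements; in particular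
it has continuum many classes. -/
theorem fsigma_equivalence_uncountably_many_classes
    {X : Type*} [TopologicalSpace X] [PolishSpace X]
    (r : X → X → Prop)
    (hequiv : Equivalence r)
    (hFσ : ∃ F : ℕ → Set (X × X), (∀ n, IsClosed (F n)) ∧
      {p : X × X | r p.1 p.2} = ⋃ n, F n)
    (huncount : ¬ ∃ D : Set X, D.Countable ∧ ∀ x : X, ∃ d ∈ D, r x d) :
    (∃ P : Set X, Perfect P ∧ P.Nonempty ∧
      ∀ a ∈ P, ∀ b ∈ P, a ≠ b → ¬ r a b) ∧
    ∃ g : (ℕ → Bool) → X, Function.Injective g ∧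
      ∀ σ τ, σ ≠ τ → ¬ r (g σ) (g τ) := by
  let := TopologicalSpace.upgradeIsCompletelyMetrizable X
  have : Std.Symm r := ⟨fun _ _ => hequiv.symm⟩
  obtain ⟨F, hFc, hF⟩ := hFσ
  obtain ⟨g, hgc, hg⟩ := exists_continuous_pairwise_not_rel hFc hF
    fun ⟨D, hD, hcov⟩ => huncount ⟨D, hD, fun x => hcov x (mem_univ x)⟩
  have hinj : Injective g := fun σ τ h => by
    by_contra hne
    exact hg hne (h ▸ hequiv.refl (g σ))
  refine ⟨⟨range g, hgc.perfect_range hinj, range_nonempty g, ?_⟩, g, hinj, fun _ _ => @hg _ _⟩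
  rintro _ ⟨σ, rfl⟩ _ ⟨τ, rfl⟩ hne
  exact hg (ne_of_apply_ne g hne)
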